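/- Let C be a configuration whose smallest enclosing rectangle, after translating so that its corners are A = (0,0), B = (n−1, 0), C = (n−1, m−1), D = (0, m−1), has width n ≥ 1 and height m ≥ 1. Define σ_v : ℤ² → ℤ² by σ_v(x, y) = (n−1−x, y) (reflection across the vertical line bisecting the rectangle). Then λ_AB = λ_BA if and only if σ_v maps C onto C, i.e. C is invariant under reflection across the vertical bisector of its smallest enclosing rectangle. -/

import Mathlib

/-! Robots occupy distinct points of the integer grid `ℤ²`; a configuration is a
nonempty finite set `C : Finset (ℤ × ℤ)`.  Throughout, the smallest enclosing
rectangle is translated so that its corners are `A = (0,0)`, `B = (n-1,0)`,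
`C = (n-1,m-1)`, `D = (0,m-1)`, where `n` is the number of grid points on side
`AB` and `m` the number of grid points on side `AD`. -/

/-- Occupancy scan of a rectangle: `M` successive grid lines, each holding `N`
grid points; `f i j` is the grid point on the `i`-th line at position `j`;
record `true` at occupied and `false` at unoccupied grid points. -/
def scanStr (C : Finset (ℤ × ℤ)) (M N : ℕ) (f : ℕ → ℕ → ℤ × ℤ) : List Bool :=
  (List.range M).flatMap (fun i => (List.range N).map (fun j => decide (f i j ∈ C)))

/-- `λ_AB`: rows `y = 0, …, m-1`, each scanned with `x` ascending. -/
def lamAB (C : Finset (ℤ × ℤ)) (n m : ℕ) : List Bool :=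
  scanStr C m n (fun y x => ((x : ℤ), (y : ℤ)))

/-- `λ_BA`: rows `y = 0, …, m-1`, each scanned with `x` descending. -/
def lamBA (C : Finset (ℤ × ℤ)) (n m : ℕ) : List Bool :=
  scanStr C m n (fun y x => ((n : ℤ) - 1 - x, (y : ℤ)))

/-- `λ_CD`: rows `y = m-1, …, 0`, each scanned with `x` descending. -/
def lamCD (C : Finset (ℤ × ℤ)) (n m : ℕ) : List Bool :=
  scanStr C m n (fun y x => ((n : ℤ) - 1 - x, (m : ℤ) - 1 - y))

/-- `λ_DC`: rows `y = m-1, …, 0`, each scanned with `x` ascending. -/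
def lamDC (C : Finset (ℤ × ℤ)) (n m : ℕ) : List Bool :=
  scanStr C m n (fun y x => ((x : ℤ), (m : ℤ) - 1 - y))

/-- `λ_BC`: columns `x = n-1, …, 0`, each scanned with `y` ascending. -/
def lamBC (C : Finset (ℤ × ℤ)) (n m : ℕ) : List Bool :=
  scanStr C n m (fun x y => ((n : ℤ) - 1 - x, (y : ℤ)))

/-- `λ_CB`: columns `x = n-1, …, 0`, each scanned with `y` descending. -/
def lamCB (C : Finset (ℤ × ℤ)) (n m : ℕ) : List Bool :=
  scanStr C n m (fun x y => ((n : ℤ) - 1 - x, (m : ℤ) - 1 - y))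

/-- `λ_AD`: columns `x = 0, …, n-1`, each scanned with `y` ascending. -/
def lamAD (C : Finset (ℤ × ℤ)) (n m : ℕ) : List Bool :=
  scanStr C n m (fun x y => ((x : ℤ), (y : ℤ)))

/-- `λ_DA`: columns `x = 0, …, n-1`, each scanned with `y` descending. -/
def lamDA (C : Finset (ℤ × ℤ)) (n m : ℕ) : List Bool :=
  scanStr C n m (fun x y => ((x : ℤ), (m : ℤ) - 1 - y))

/-- Strict lexicographic comparison of binary strings. -/
def lexLt (a b : List Bool) : Prop := List.Lex (· < ·) a b

/-- The smallest enclosing rectangle of `C` is `[0, n-1] × [0, m-1]`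
(`n` grid points wide, `m` grid points high). -/
def isSER (C : Finset (ℤ × ℤ)) (n m : ℕ) : Prop :=
  (∀ p ∈ C, 0 ≤ p.1 ∧ p.1 ≤ (n : ℤ) - 1 ∧ 0 ≤ p.2 ∧ p.2 ≤ (m : ℤ) - 1) ∧
  (∃ p ∈ C, p.1 = 0) ∧ (∃ p ∈ C, p.1 = (n : ℤ) - 1) ∧
  (∃ p ∈ C, p.2 = 0) ∧ (∃ p ∈ C, p.2 = (m : ℤ) - 1)

/-- The order in which grid points are visited by the scan `λ_AB`:
`p` comes strictly before `q`. -/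
def scanLt (p q : ℤ × ℤ) : Prop := p.2 < q.2 ∨ (p.2 = q.2 ∧ p.1 < q.1)

/-- `h` is the head of `C`: the robot at the position of the first `1` of `λ_AB`. -/
def isHead (C : Finset (ℤ × ℤ)) (h : ℤ × ℤ) : Prop :=
  h ∈ C ∧ ∀ p ∈ C, p ≠ h → scanLt h p

/-- `t` is the tail of `C`: the robot at the position of the last `1` of `λ_AB`. -/
def isTail (C : Finset (ℤ × ℤ)) (t : ℤ × ℤ) : Prop :=
  t ∈ C ∧ ∀ p ∈ C, p ≠ t → scanLt p t

/-- The four associated strings of a non-square configuration. -/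
def strings4 (C : Finset (ℤ × ℤ)) (n m : ℕ) : List (List Bool) :=
  [lamAB C n m, lamBA C n m, lamCD C n m, lamDC C n m]

/-- The eight associated strings of a configuration whose rectangle is a square. -/
def strings8 (C : Finset (ℤ × ℤ)) (n m : ℕ) : List (List Bool) :=
  [lamAB C n m, lamBA C n m, lamCD C n m, lamDC C n m,
   lamBC C n m, lamCB C n m, lamAD C n m, lamDA C n m]

/-- The associated strings of `C`: eight of them if the rectangle is a square,
four otherwise. -/
def assocStrings (C : Finset (ℤ × ℤ)) (n m : ℕ) : List (List Bool) :=
  if n = m then strings8 C n m else strings4 C n m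

/-- The `i`-th member of the list `L` of associated strings is the unique
lexicographically largest one: every other member (by position) is strictly
smaller. -/
def uniqueMaxAt (L : List (List Bool)) (i : ℕ) : Prop :=
  i < L.length ∧ ∀ j < L.length, j ≠ i → lexLt (L.getD j []) (L.getD i [])

/-- `C` is asymmetric: among its associated strings there is a unique
lexicographically largest one. -/
def asymmetricCfg (C : Finset (ℤ × ℤ)) (n m : ℕ) : Prop :=
  ∃ i, uniqueMaxAt (assocStrings C n m) i

/-- `λ_AB` is the unique lexicographically largest associated string of `C`
(so `C` is asymmetric with leading corner `A`). -/
def leadingABCfg (C : Finset (ℤ × ℤ)) (n m : ℕ) : Prop :=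
  uniqueMaxAt (assocStrings C n m) 0

/-! The two strings scan the same rows, so they agree iff every grid point `(x, y)` of the
rectangle and its mirror image `σ_v (x, y)` are both occupied or both vacant. As `C` lies in
the rectangle and `σ_v` is an involution, this says `σ_v C ⊆ C`, which for an injective map on
a finite set is the same as `σ_v C = C`. -/

open Function

theorem List.flatMap_inj_left_of_length_eq {α β : Type*} {l : List α} {f g : α → List β}
    (h : ∀ a, (f a).length = (g a).length) :
    l.flatMap f = l.flatMap g ↔ ∀ a ∈ l, f a = g a := by
  refine ⟨fun he => ?_, List.flatMap_congr⟩
  induction l with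
  | nil => simp
  | cons a t ih =>
    rw [List.flatMap_cons, List.flatMap_cons] at he
    obtain ⟨ha, ht⟩ := List.append_inj he (h a)
    exact List.forall_mem_cons.mpr ⟨ha, ih ht⟩

theorem Finset.image_eq_self_iff_of_injective {α : Type*} [DecidableEq α] {f : α → α}
    (hf : Injective f) {s : Finset α} :
    s.image f = s ↔ ∀ a ∈ s, f a ∈ s :=
  (subset_iff_eq_of_card_le (card_image_of_injective s hf).ge).symm.trans image_subset_iff

theorem scanStr_eq_scanStr_iff {C : Finset (ℤ × ℤ)} {M N : ℕ} {f g : ℕ → ℕ → ℤ × ℤ} :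
    scanStr C M N f = scanStr C M N g ↔ ∀ i < M, ∀ j < N, (f i j ∈ C ↔ g i j ∈ C) := by
  rw [scanStr, scanStr, List.flatMap_inj_left_of_length_eq (fun _ => by simp)]
  simp only [List.map_inj_left, List.mem_range, decide_eq_decide]

/-- `σ_v`, the reflection across the vertical bisector of the rectangle `[0, n-1] × [0, m-1]`. -/
def vReflect (n : ℕ) (p : ℤ × ℤ) : ℤ × ℤ := ((n : ℤ) - 1 - p.1, p.2)

theorem vReflect_involutive (n : ℕ) : Involutive (vReflect n) := fun p => by
  simp [vReflect]

theorem forall_grid_mem_iff_vReflect_mem_iff {C : Finset (ℤ × ℤ)} {n m : ℕ}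
    (hC : ∀ p ∈ C, 0 ≤ p.1 ∧ p.1 ≤ (n : ℤ) - 1 ∧ 0 ≤ p.2 ∧ p.2 ≤ (m : ℤ) - 1) :
    (∀ y < m, ∀ x < n, (((x : ℤ), (y : ℤ)) ∈ C ↔ vReflect n (x, y) ∈ C)) ↔
      ∀ p ∈ C, vReflect n p ∈ C := by
  constructor
  · rintro h ⟨a, b⟩ hp
    obtain ⟨ha₀, ha₁, hb₀, hb₁⟩ := hC _ hp
    lift a to ℕ using ha₀
    lift b to ℕ using hb₀
    exact (h b (by omega) a (by omega)).mp hp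
  · intro h y _ x _
    exact ⟨h _, fun hp => vReflect_involutive n (x, y) ▸ h _ hp⟩

theorem lamAB_eq_lamBA_iff_vertical_reflection_invariant_general
    (C : Finset (ℤ × ℤ)) (n m : ℕ)
    (hser : isSER C n m) :
    lamAB C n m = lamBA C n m ↔
      C.image (fun p => ((n : ℤ) - 1 - p.1, p.2)) = C := by
  rw [lamAB, lamBA, scanStr_eq_scanStr_iff]
  change _ ↔ C.image (vReflect n) = C
  rw [Finset.image_eq_self_iff_of_injective (vReflect_involutive n).injective]
  exact forall_grid_mem_iff_vReflect_mem_iff hser.1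

/-- Let `C` be a configuration whose smallest enclosing
rectangle, after translation, has corners `A = (0,0)`, `B = (n-1,0)`,
`C = (n-1,m-1)`, `D = (0,m-1)` with `n ≥ 1`, `m ≥ 1`.  Define
`σ_v(x, y) = (n-1-x, y)` (reflection across the vertical line bisecting the
rectangle).  Then `λ_AB = λ_BA` if and only if `σ_v` maps `C` onto `C`, i.e.
`C` is invariant under reflection across the vertical bisector of its smallest
enclosing rectangle. -/
theorem lamAB_eq_lamBA_iff_vertical_reflection_invariant
    (C : Finset (ℤ × ℤ)) (n m : ℕ) (hn : 1 ≤ n) (hm : 1 ≤ m)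
    (hser : isSER C n m) :
    lamAB C n m = lamBA C n m ↔
      C.image (fun p => ((n : ℤ) - 1 - p.1, p.2)) = C :=
  lamAB_eq_lamBA_iff_vertical_reflection_invariant_general C n m hser
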